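/- arXiv:2603.10317 — 5 statements merged into one kernel-verified Lean document; each statement's English description precedes it below -/
import Mathlib

section
/- A finite simple graph G has a {1,2}-factor if and only if for every subset S of V(G), the number of isolated vertices of G − S is at most |S|. -/
/-- A `{1,2}`-factor of `G` : a spanning subgraph `H ≤ G` all of whose connected components
are regular of degree one or two, i.e. every vertex has degree 1 or 2 in `H` and any two
vertices in the same component of `H` have equal degree. -/
def SimpleGraph.Has12Factor {V : Type*} [Fintype V] (G : SimpleGraph V) : Prop :=
  ∃ H : SimpleGraph V, H ≤ G ∧
    (∀ v : V, (H.neighborSet v).ncard = 1 ∨ (H.neighborSet v).ncard = 2) ∧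
    (∀ u v : V, H.Reachable u v → (H.neighborSet u).ncard = (H.neighborSet v).ncard)

/-!
If `H` is a `{1,2}`-factor and `S` is a set of vertices, every isolated vertex `v` of `G - S` has
all its `H`-neighbours in `S`, and these have the same degree `d(v)` as `v`. Sending weight
`1 / d(s)` along each `H`-edge from `v` to `s ∈ S` moves one unit out of every such `v` and at
most one unit into every `s ∈ S`, so `i(G - S) ≤ |S|`.

Conversely, if `T` is a set of vertices with `|N(T)| < |T|`, then `S = N(T) \ T` violates the
condition, since every vertex of `T \ N(T)` is isolated in `G - S`. So Hall's condition holds for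
the neighbourhoods, and `G` has a permutation `σ` with `v ~ σ v` for all `v`. The edges
`{v, σ v}` form a `{1,2}`-factor: the 2-cycles of `σ` give single edges, the longer cycles give
cycles.
-/

open Finset

namespace SimpleGraph

variable {V : Type*}

theorem Reachable.apply_eq_of_forall_adj {β : Sort*} {G : SimpleGraph V} {f : V → β}
    (hf : ∀ u v, G.Adj u v → f u = f v) {u v : V} (h : G.Reachable u v) : f u = f v := by
  obtain ⟨p⟩ := h
  induction p with
  | nil => rfl
  | cons hadj _ ih => exact (hf _ _ hadj).trans ih

theorem card_le_card_of_neighborFinset_subset [Fintype V] [DecidableEq V] (H : SimpleGraph V)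
    [DecidableRel H.Adj] (hdeg : ∀ u v, H.Adj u v → H.degree u = H.degree v) {I S : Finset V}
    (hI : ∀ v ∈ I, H.degree v ≠ 0) (hIS : ∀ v ∈ I, H.neighborFinset v ⊆ S) : #I ≤ #S := by
  have hout : ∀ v ∈ I, ∑ s ∈ S with H.Adj v s, (1 / H.degree s : ℚ) = 1 := by
    intro v hv
    have hnbr : {s ∈ S | H.Adj v s} = H.neighborFinset v := by
      ext s
      simpa using fun h => hIS v hv ((H.mem_neighborFinset v s).2 h)
    rw [hnbr, sum_congr rfl fun s hs => by rw [← hdeg v s ((H.mem_neighborFinset v s).1 hs)]]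
    simp [hI v hv]
  have hin : ∀ s ∈ S, ∑ v ∈ I with H.Adj v s, (1 / H.degree s : ℚ) ≤ 1 := by
    intro s _
    have hcard : #{v ∈ I | H.Adj v s} ≤ H.degree s :=
      card_le_card fun v hv => (H.mem_neighborFinset s v).2 (mem_filter.1 hv).2.symm
    rw [sum_const, nsmul_eq_mul, mul_one_div]
    exact div_le_one_of_le₀ (by exact_mod_cast hcard) (Nat.cast_nonneg _)
  have : (#I : ℚ) ≤ #S := calc
    (#I : ℚ) = ∑ v ∈ I, ∑ s ∈ S with H.Adj v s, (1 / H.degree s : ℚ) := by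
      rw [sum_congr rfl hout]; simp
    _ = ∑ s ∈ S, ∑ v ∈ I with H.Adj v s, (1 / H.degree s : ℚ) := by
      simp only [sum_filter]; exact sum_comm
    _ ≤ ∑ s ∈ S, 1 := sum_le_sum hin
    _ = #S := by simp
  exact_mod_cast this

theorem Has12Factor.ncard_isolated_le [Fintype V] {G : SimpleGraph V} (hG : G.Has12Factor)
    (S : Finset V) : {v : V | v ∉ S ∧ ∀ u : V, u ∉ S → ¬ G.Adj v u}.ncard ≤ #S := by
  classical
  obtain ⟨H, hHG, hdeg, hreach⟩ := hG
  have hncard (v : V) : (H.neighborSet v).ncard = H.degree v := by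
    rw [Set.ncard_eq_toFinset_card', ← neighborFinset_def, card_neighborFinset_eq_degree]
  simp only [hncard] at hdeg hreach
  rw [Set.ncard_eq_toFinset_card']
  refine H.card_le_card_of_neighborFinset_subset (fun u v h => hreach u v h.reachable)
    (fun v _ => by rcases hdeg v with h | h <;> omega) fun v hv s hs => ?_
  rw [Set.mem_toFinset] at hv
  by_contra hsS
  exact hv.2 s hsS (hHG ((H.mem_neighborFinset v s).1 hs))

theorem card_le_card_biUnion_neighborFinset [Fintype V] [DecidableEq V] (G : SimpleGraph V)
    [DecidableRel G.Adj]
    (h : ∀ S : Finset V, {v : V | v ∉ S ∧ ∀ u : V, u ∉ S → ¬ G.Adj v u}.ncard ≤ #S)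
    (T : Finset V) : #T ≤ #(T.biUnion fun v => G.neighborFinset v) := by
  set N := T.biUnion fun v => G.neighborFinset v
  have hN {v u : V} (hv : v ∈ T) (hvu : G.Adj v u) : u ∈ N :=
    mem_biUnion.2 ⟨v, hv, (G.mem_neighborFinset v u).2 hvu⟩
  have hsub : (↑(T \ N) : Set V) ⊆ {v | v ∉ N \ T ∧ ∀ u, u ∉ N \ T → ¬ G.Adj v u} := by
    intro v hv
    simp only [coe_sdiff, Set.mem_sdiff, mem_coe] at hv
    refine ⟨fun hv' => (mem_sdiff.1 hv').2 hv.1, fun u hu hvu => hv.2 (hN ?_ hvu.symm)⟩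
    by_contra huT
    exact hu (mem_sdiff.2 ⟨hN hv.1 hvu, huT⟩)
  rw [← card_sdiff_le_card_sdiff_iff, ← Set.ncard_coe_finset]
  exact (Set.ncard_le_ncard hsub (Set.toFinite _)).trans (h _)

theorem neighborSet_fromRel_perm {σ : Equiv.Perm V} (hσ : ∀ v, σ v ≠ v) (v : V) :
    (fromRel fun a b => σ a = b).neighborSet v = {σ v, σ.symm v} := by
  ext u
  simp only [mem_neighborSet, fromRel_adj, Set.mem_insert_iff, Set.mem_singleton_iff]
  constructor
  · rintro ⟨-, h | h⟩
    · exact Or.inl h.symm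
    · exact Or.inr (σ.eq_symm_apply.2 h)
  · rintro (rfl | rfl)
    · exact ⟨(hσ v).symm, Or.inl rfl⟩
    · exact ⟨fun h => hσ v (σ.symm_apply_eq.1 h.symm).symm, Or.inr (σ.apply_symm_apply v)⟩

theorem ncard_neighborSet_fromRel_perm [DecidableEq V] {σ : Equiv.Perm V} (hσ : ∀ v, σ v ≠ v)
    (v : V) :
    ((fromRel fun a b => σ a = b).neighborSet v).ncard = if σ (σ v) = v then 1 else 2 := by
  rw [neighborSet_fromRel_perm hσ]
  split_ifs with h
  · rw [σ.eq_symm_apply.2 h, Set.pair_eq_singleton, Set.ncard_singleton]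
  · exact Set.ncard_pair fun h' => h (by rw [h', σ.apply_symm_apply])

theorem has12Factor_of_perm [Fintype V] {G : SimpleGraph V} (σ : Equiv.Perm V)
    (hσ : ∀ v, G.Adj v (σ v)) : G.Has12Factor := by
  classical
  have hfix (v : V) : σ v ≠ v := (hσ v).ne'
  refine ⟨fromRel fun a b => σ a = b, ?_, fun v => ?_, fun u v huv => ?_⟩
  · rintro a b ⟨-, rfl | rfl⟩
    exacts [hσ a, (hσ b).symm]
  · rw [ncard_neighborSet_fromRel_perm hfix]
    split_ifs <;> simp
  · simp only [ncard_neighborSet_fromRel_perm hfix]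
    refine huv.apply_eq_of_forall_adj (f := fun w => if σ (σ w) = w then 1 else 2)
      fun a b hab => ?_
    rcases (fromRel_adj _ a b).1 hab with ⟨-, rfl | rfl⟩ <;> simp [σ.injective.eq_iff]

end SimpleGraph

/-- A graph has a `{1,2}`-factor iff `i(G - S) ≤ |S|` for all `S ⊆ V(G)`. -/
theorem stmt_0 {V : Type*} [Fintype V] (G : SimpleGraph V) :
    G.Has12Factor ↔
      ∀ S : Finset V,
        {v : V | v ∉ S ∧ ∀ u : V, u ∉ S → ¬ G.Adj v u}.ncard ≤ S.card := by
  classical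
  refine ⟨fun hG => hG.ncard_isolated_le, fun h => ?_⟩
  obtain ⟨f, hf, hfG⟩ :=
    (all_card_le_biUnion_card_iff_exists_injective fun v => G.neighborFinset v).1
      (G.card_le_card_biUnion_neighborFinset h)
  exact SimpleGraph.has12Factor_of_perm (Equiv.ofBijective f hf.bijective_of_finite)
    fun v => (G.mem_neighborFinset v (f v)).1 (hfG v)
end

section
/- Let G be a finite simple graph of order n and let 0 ≤ k < n. If G is k-{1,2}-factor-critical, then the minimum degree of G satisfies δ(G) ≥ k + 1. -/
/-- `G` is `k`-`{1,2}`-factor-critical if deleting any set of exactly `k` vertices leaves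
a graph having a `{1,2}`-factor. -/
def SimpleGraph.Is12FactorCritical {V : Type*} [Fintype V] [DecidableEq V]
    (G : SimpleGraph V) (k : ℕ) : Prop :=
  ∀ S : Finset V, S.card = k → (G.induce ((Sᶜ : Finset V) : Set V)).Has12Factor

/-- If `G` of order `n`, `0 ≤ k < n`, is `k`-`{1,2}`-factor-critical, then `δ(G) ≥ k + 1`. -/
theorem stmt_3 {V : Type*} [Fintype V] [DecidableEq V] [Nonempty V] (G : SimpleGraph V)
    [DecidableRel G.Adj] (k : ℕ) (hk : k < Fintype.card V)
    (h : G.Is12FactorCritical k) :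
    k + 1 ≤ G.minDegree := by

  by_contra hlt
  push_neg at hlt
  obtain ⟨v, hvdeg⟩ := G.exists_minimal_degree_vertex
  have hdv : G.degree v ≤ k := by omega
  -- find S of size k containing N(v), not containing v
  have hsub : G.neighborFinset v ⊆ {v}ᶜ := by
    intro u hu
    simp only [Finset.mem_compl, Finset.mem_singleton]
    intro he
    subst he
    simp at hu
  have hcards : k ≤ ({v}ᶜ : Finset V).card := by
    rw [Finset.card_compl]
    simp only [Finset.card_singleton]
    omega
  obtain ⟨S, hNS, hSsub, hScard⟩ := Finset.exists_subsuperset_card_eq hsub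
    (by rw [← G.card_neighborFinset_eq_degree] at hdv; exact hdv) hcards
  obtain ⟨H, hHle, hdeg, _⟩ := h S hScard
  have hvS : v ∉ S := by
    intro hv
    have := hSsub hv
    simp at this
  have hvC : v ∈ ((Sᶜ : Finset V) : Set V) := by simpa using hvS
  have hempty : H.neighborSet ⟨v, hvC⟩ = ∅ := by
    ext w
    simp only [SimpleGraph.mem_neighborSet, Set.mem_empty_iff_false, iff_false]
    intro hadj
    have hG : G.Adj v (w : V) := hHle hadj
    have hwS : (w : V) ∈ S := hNS (by simpa using hG)
    have hwC : (w : V) ∈ ((Sᶜ : Finset V) : Set V) := w.2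
    simp at hwC
    exact hwC hwS
  rcases hdeg ⟨v, hvC⟩ with h1 | h2
  · rw [hempty] at h1; simp at h1
  · rw [hempty] at h2; simp at h2
end

section
/- A finite simple graph G has a {1,2}-factor if and only if |S| ≤ |N_G(S)| for every set S ⊆ V(G). -/
open Finset

section aux
variable {V : Type*} [Fintype V] [DecidableEq V]

/-- Counting lemma: if all of `s` and all neighbors of `s` have degree `d > 0`, then
`|s| ≤ |N(s)|`. -/
lemma count_lemma (H : SimpleGraph V) [DecidableRel H.Adj] (d : ℕ) (hd : 0 < d)
    (s : Finset V) (hs : ∀ v ∈ s, H.degree v = d)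
    (hnb : ∀ u v, v ∈ s → H.Adj v u → H.degree u = d) :
    s.card ≤ (s.biUnion (fun v => H.neighborFinset v)).card := by
  set T := s.biUnion (fun v => H.neighborFinset v) with hT
  have key : d * s.card ≤ d * T.card := by
    calc d * s.card = ∑ v ∈ s, H.degree v := by
          rw [Finset.sum_congr rfl hs, Finset.sum_const, smul_eq_mul, mul_comm]
      _ = ∑ v ∈ s, ∑ u : V, if H.Adj v u then 1 else 0 := by
          refine Finset.sum_congr rfl fun v _ => ?_
          rw [SimpleGraph.degree, SimpleGraph.neighborFinset_eq_filter, Finset.card_filter]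
      _ = ∑ u : V, ∑ v ∈ s, if H.Adj v u then 1 else 0 := Finset.sum_comm
      _ ≤ ∑ u : V, (if u ∈ T then d else 0) := by
          refine Finset.sum_le_sum fun u _ => ?_
          by_cases h : ∃ v ∈ s, H.Adj v u
          · obtain ⟨v, hv, hadj⟩ := h
            have hu : u ∈ T := Finset.mem_biUnion.2
              ⟨v, hv, (SimpleGraph.mem_neighborFinset _ _ _).2 hadj⟩
            rw [if_pos hu]
            calc ∑ v ∈ s, (if H.Adj v u then 1 else 0)
                = (s.filter (fun v => H.Adj v u)).card := (Finset.card_filter _ _).symm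
              _ ≤ H.degree u := by
                  apply Finset.card_le_card
                  intro w hw
                  rw [Finset.mem_filter] at hw
                  exact (SimpleGraph.mem_neighborFinset _ _ _).2 hw.2.symm
              _ = d := hnb u v hv hadj
          · push_neg at h
            have : ∀ v ∈ s, (if H.Adj v u then 1 else 0) = 0 := fun v hv => by
              simp [h v hv]
            rw [Finset.sum_congr rfl this]
            simp
      _ = d * T.card := by
          rw [Finset.sum_ite_mem, Finset.univ_inter, Finset.sum_const, smul_eq_mul, mul_comm]
  exact Nat.le_of_mul_le_mul_left key hd

omit [DecidableEq V] in
lemma ncard_eq_degree (H : SimpleGraph V) [DecidableRel H.Adj] (v : V) :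
    (H.neighborSet v).ncard = H.degree v := by
  rw [Set.ncard_eq_toFinset_card']
  rfl

end aux

/-- `G` has a `{1,2}`-factor iff `|S| ≤ |N_G(S)|` for every `S ⊆ V(G)`. -/
theorem stmt_5 {V : Type*} [Fintype V] (G : SimpleGraph V) :
    G.Has12Factor ↔
      ∀ S : Set V, S.ncard ≤ {u : V | ∃ v ∈ S, G.Adj v u}.ncard := by
  classical
  constructor
  · rintro ⟨H, hle, hdeg, hconst⟩ S
    have hdc : DecidableRel H.Adj := Classical.decRel _
    -- degrees as natural numbers
    have hdeg' : ∀ v, H.degree v = 1 ∨ H.degree v = 2 := by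
      intro v; rw [← ncard_eq_degree]; exact hdeg v
    have hconst' : ∀ u v, H.Adj v u → H.degree u = H.degree v := by
      intro u v h
      rw [← ncard_eq_degree, ← ncard_eq_degree]
      exact hconst u v h.symm.reachable
    set s : Finset V := S.toFinset with hsdef
    set s1 : Finset V := s.filter (fun v => H.degree v = 1) with hs1
    set s2 : Finset V := s.filter (fun v => H.degree v = 2) with hs2
    have hsplit : s1 ∪ s2 = s := by
      ext v
      simp only [hs1, hs2, Finset.mem_union, Finset.mem_filter]
      constructor
      · rintro (⟨h, _⟩ | ⟨h, _⟩) <;> exact h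
      · intro hv; rcases hdeg' v with h | h
        · exact Or.inl ⟨hv, h⟩
        · exact Or.inr ⟨hv, h⟩
    have hdisj : Disjoint s1 s2 := by
      rw [Finset.disjoint_left]
      intro v h1 h2
      rw [hs1, Finset.mem_filter] at h1
      rw [hs2, Finset.mem_filter] at h2
      omega
    set T1 := s1.biUnion (fun v => H.neighborFinset v) with hT1
    set T2 := s2.biUnion (fun v => H.neighborFinset v) with hT2
    have hT1deg : ∀ u ∈ T1, H.degree u = 1 := by
      intro u hu
      obtain ⟨v, hv, hadj⟩ := Finset.mem_biUnion.1 hu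
      rw [SimpleGraph.mem_neighborFinset] at hadj
      rw [hs1, Finset.mem_filter] at hv
      rw [hconst' u v hadj]; exact hv.2
    have hT2deg : ∀ u ∈ T2, H.degree u = 2 := by
      intro u hu
      obtain ⟨v, hv, hadj⟩ := Finset.mem_biUnion.1 hu
      rw [SimpleGraph.mem_neighborFinset] at hadj
      rw [hs2, Finset.mem_filter] at hv
      rw [hconst' u v hadj]; exact hv.2
    have hTdisj : Disjoint T1 T2 := by
      rw [Finset.disjoint_left]
      intro u h1 h2
      have := hT1deg u h1
      have := hT2deg u h2
      omega
    have hc1 : s1.card ≤ T1.card := by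
      apply count_lemma H 1 one_pos
      · intro v hv; rw [hs1, Finset.mem_filter] at hv; exact hv.2
      · intro u v hv hadj
        rw [hconst' u v hadj]
        rw [hs1, Finset.mem_filter] at hv; exact hv.2
    have hc2 : s2.card ≤ T2.card := by
      apply count_lemma H 2 two_pos
      · intro v hv; rw [hs2, Finset.mem_filter] at hv; exact hv.2
      · intro u v hv hadj
        rw [hconst' u v hadj]
        rw [hs2, Finset.mem_filter] at hv; exact hv.2
    have hTsub : T1 ∪ T2 ⊆ s.biUnion (fun v => G.neighborFinset v) := by
      intro u hu
      rcases Finset.mem_union.1 hu with h | h <;>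
        · obtain ⟨v, hv, hadj⟩ := Finset.mem_biUnion.1 h
          rw [SimpleGraph.mem_neighborFinset] at hadj
          refine Finset.mem_biUnion.2 ⟨v, ?_, (SimpleGraph.mem_neighborFinset _ _ _).2 (hle hadj)⟩
          exact Finset.mem_of_mem_filter v hv
    have hcard : s.card ≤ (s.biUnion (fun v => G.neighborFinset v)).card := by
      calc s.card = s1.card + s2.card := by
            rw [← hsplit, Finset.card_union_of_disjoint hdisj]
        _ ≤ T1.card + T2.card := Nat.add_le_add hc1 hc2
        _ = (T1 ∪ T2).card := (Finset.card_union_of_disjoint hTdisj).symm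
        _ ≤ _ := Finset.card_le_card hTsub
    have hset : {u : V | ∃ v ∈ S, G.Adj v u} = ↑(s.biUnion (fun v => G.neighborFinset v)) := by
      ext u
      simp [hsdef]
    rw [hset, Set.ncard_coe_finset, show S.ncard = s.card from Set.ncard_eq_toFinset_card' S]
    exact hcard
  · intro hall
    have hall' : ∀ (s : Finset V), s.card ≤ (s.biUnion (fun v => G.neighborFinset v)).card := by
      intro s
      have h := hall ↑s
      have hset : {u : V | ∃ v ∈ (↑s : Set V), G.Adj v u}
          = ↑(s.biUnion (fun v => G.neighborFinset v)) := by
        ext u; simp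
      rwa [Set.ncard_coe_finset, hset, Set.ncard_coe_finset] at h
    obtain ⟨f, hfinj, hf⟩ :=
      (Finset.all_card_le_biUnion_card_iff_exists_injective (fun v => G.neighborFinset v)).1 hall'
    have hbij : Function.Bijective f := Finite.injective_iff_bijective.1 hfinj
    set e : V ≃ V := Equiv.ofBijective f hbij with he
    have hadj : ∀ v, G.Adj v (e v) := fun v =>
      (SimpleGraph.mem_neighborFinset _ _ _).1 (hf v)
    have hne : ∀ v, e v ≠ v := fun v => (hadj v).ne'
    have hne' : ∀ v, e.symm v ≠ v := by
      intro v h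
      have : e (e.symm v) = e v := by rw [h]
      rw [Equiv.apply_symm_apply] at this
      exact hne v this.symm
    set H : SimpleGraph V := SimpleGraph.fromRel (fun u v => e u = v) with hH
    have hHadj : ∀ u v, H.Adj u v ↔ u ≠ v ∧ (e u = v ∨ e v = u) := by
      intro u v; rw [hH, SimpleGraph.fromRel_adj]
    have hnbr : ∀ v, H.neighborSet v = {e v, e.symm v} := by
      intro v
      ext u
      simp only [SimpleGraph.mem_neighborSet, hHadj, Set.mem_insert_iff, Set.mem_singleton_iff]
      constructor
      · rintro ⟨hvu, h | h⟩
        · exact Or.inl h.symm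
        · exact Or.inr (by rw [← h, Equiv.symm_apply_apply])
      · rintro (rfl | rfl)
        · exact ⟨(hne v).symm, Or.inl rfl⟩
        · exact ⟨(hne' v).symm, Or.inr (Equiv.apply_symm_apply e v)⟩
    -- the degree (1 or 2) is governed by whether `e (e v) = v`
    have hdeg : ∀ v, (H.neighborSet v).ncard = if e (e v) = v then 1 else 2 := by
      intro v
      rw [hnbr]
      by_cases h : e (e v) = v
      · have : e v = e.symm v := by
          apply e.injective
          rw [Equiv.apply_symm_apply, h]
        rw [if_pos h, ← this, Set.pair_eq_singleton, Set.ncard_singleton]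
      · have : e v ≠ e.symm v := by
          intro heq
          apply h
          have := congrArg e heq
          rwa [Equiv.apply_symm_apply] at this
        rw [if_neg h, Set.ncard_pair this]
    have hadjconst : ∀ u v, H.Adj u v →
        (H.neighborSet u).ncard = (H.neighborSet v).ncard := by
      intro u v huv
      rw [hHadj] at huv
      obtain ⟨hne2, h | h⟩ := huv
      · rw [hdeg, hdeg]
        have : (e (e u) = u) ↔ (e (e v) = v) := by
          constructor
          · intro h2
            rw [h] at h2
            rw [h2]; exact h
          · intro h2
            rw [← h] at h2
            -- h2 : e (e (e u)) = e u, so e (e u) = u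
            exact e.injective h2
        simp only [this]
      · rw [hdeg, hdeg]
        have : (e (e v) = v) ↔ (e (e u) = u) := by
          constructor
          · intro h2
            rw [h] at h2
            rw [h2]; exact h
          · intro h2
            rw [← h] at h2
            exact e.injective h2
        simp only [this]
    refine ⟨H, ?_, ?_, ?_⟩
    · intro u v huv
      rw [hHadj] at huv
      obtain ⟨_, h | h⟩ := huv
      · rw [← h]; exact hadj u
      · rw [← h]; exact (hadj v).symm
    · intro v
      rw [hdeg]
      by_cases h : e (e v) = v
      · rw [if_pos h]; exact Or.inl rfl
      · rw [if_neg h]; exact Or.inr rfl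
    · intro u v hr
      obtain ⟨w⟩ := hr
      induction w with
      | nil => rfl
      | cons hadj2 p ih => exact (hadjconst _ _ hadj2).trans ih
end

section
/- For every finite simple graph G, the critical difference equals the critical independence difference; that is, the maximum of |X| − |N_G(X)| over all subsets X ⊆ V(G) equals the maximum of |I| − |N_G(I)| over all independent subsets I ⊆ V(G). -/
/-!
For any `X`, the set `I = X \ N(X)` is independent and `N(I) ⊆ N(X) \ X`. Since
`|X| - |N(X)| = |X \ N(X)| - |N(X) \ X|`, passing from `X` to `I` does not decrease the
difference, so the maximum over all sets is already attained at an independent one.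
-/

theorem Set.ncard_sub_ncard_eq_ncard_sdiff_sub_ncard_sdiff {α : Type*} (s t : Set α)
    (hs : s.Finite := by toFinite_tac) (ht : t.Finite := by toFinite_tac) :
    (s.ncard : ℤ) - t.ncard = ((s \ t).ncard : ℤ) - (t \ s).ncard := by
  have hs' := Set.ncard_inter_add_ncard_sdiff_eq_ncard s t hs
  have ht' := Set.ncard_inter_add_ncard_sdiff_eq_ncard t s ht
  rw [Set.inter_comm] at ht'
  omega

namespace SimpleGraph

variable {V : Type*} (G : SimpleGraph V)

def nbhdSet (X : Set V) : Set V := {u | ∃ v ∈ X, G.Adj v u}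

theorem not_adj_of_mem_sdiff_nbhdSet (X : Set V) :
    ∀ u ∈ X \ G.nbhdSet X, ∀ v ∈ X \ G.nbhdSet X, ¬ G.Adj u v := by
  rintro u ⟨hu, -⟩ v ⟨-, hv⟩ huv
  exact hv ⟨u, hu, huv⟩

theorem nbhdSet_sdiff_nbhdSet_subset (X : Set V) :
    G.nbhdSet (X \ G.nbhdSet X) ⊆ G.nbhdSet X \ X := by
  rintro w ⟨v, ⟨hv, hvN⟩, hvw⟩
  exact ⟨⟨v, hv, hvw⟩, fun hw => hvN ⟨w, hw, hvw.symm⟩⟩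

theorem ncard_sub_ncard_nbhdSet_le_sdiff_nbhdSet [Finite V] (X : Set V) :
    (X.ncard : ℤ) - (G.nbhdSet X).ncard ≤
      ((X \ G.nbhdSet X).ncard : ℤ) - (G.nbhdSet (X \ G.nbhdSet X)).ncard := by
  rw [Set.ncard_sub_ncard_eq_ncard_sdiff_sub_ncard_sdiff]
  have := Set.ncard_le_ncard (G.nbhdSet_sdiff_nbhdSet_subset X)
  omega

end SimpleGraph

/-- The critical difference `d(G)` equals the critical independence difference `id(G)`:
the maximum of `|X| - |N_G(X)|` over all `X ⊆ V(G)` equals the maximum of the same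
quantity over all independent `I ⊆ V(G)`. -/
theorem stmt_6 {V : Type*} [Fintype V] (G : SimpleGraph V) :
    sSup {d : ℤ | ∃ X : Set V,
        d = (X.ncard : ℤ) - ({u : V | ∃ v ∈ X, G.Adj v u}.ncard : ℤ)} =
      sSup {d : ℤ | ∃ I : Set V, (∀ u ∈ I, ∀ v ∈ I, ¬ G.Adj u v) ∧
        d = (I.ncard : ℤ) - ({u : V | ∃ v ∈ I, G.Adj v u}.ncard : ℤ)} := by
  apply csSup_eq_csSup_of_forall_exists_le
  · rintro _ ⟨X, rfl⟩
    exact ⟨_, ⟨X \ G.nbhdSet X, G.not_adj_of_mem_sdiff_nbhdSet X, rfl⟩,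
      G.ncard_sub_ncard_nbhdSet_le_sdiff_nbhdSet X⟩
  · rintro _ ⟨I, -, rfl⟩
    exact ⟨_, ⟨I, rfl⟩, le_rfl⟩
end

section
/- For every n ≥ 4, the complete graph K_n is a minimal (n−3)-{1,2}-factor-critical graph; that is, for every set S of n−3 vertices, K_n − S has a {1,2}-factor, and for every edge e of K_n there exists a set S of n−3 vertices such that (K_n − e) − S has no {1,2}-factor. -/
/-- For `n ≥ 4`, the complete graph `K_n` is a minimal `(n-3)`-`{1,2}`-factor-critical
graph. -/
theorem stmt_15 (n : ℕ) (hn : 4 ≤ n) :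
    (∀ S : Finset (Fin n), S.card = n - 3 →
      ((⊤ : SimpleGraph (Fin n)).induce ((Sᶜ : Finset (Fin n)) : Set (Fin n))).Has12Factor) ∧
    (∀ x y : Fin n, x ≠ y →
      ∃ S : Finset (Fin n), S.card = n - 3 ∧
        ¬ (((⊤ : SimpleGraph (Fin n)).deleteEdges {s(x, y)}).induce
            ((Sᶜ : Finset (Fin n)) : Set (Fin n))).Has12Factor) := by
  constructor
  · intro S hS
    have hc : Sᶜ.card = 3 := by
      rw [Finset.card_compl, hS, Fintype.card_fin]; omega
    have hcard : Nat.card ((Sᶜ : Finset (Fin n)) : Set (Fin n)) = 3 := by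
      rw [Nat.card_coe_set_eq, Set.ncard_coe_finset]; exact hc
    have key : ∀ v : ((Sᶜ : Finset (Fin n)) : Set (Fin n)),
        ((⊤ : SimpleGraph _).neighborSet v).ncard = 2 := by
      intro v
      have h1 : ((⊤ : SimpleGraph _).neighborSet v) = {v}ᶜ := by
        ext w; simp [SimpleGraph.mem_neighborSet, eq_comm]
      rw [h1]
      have h2 := Set.ncard_add_ncard_compl ({v} : Set _)
      rw [Set.ncard_singleton] at h2
      omega
    refine ⟨⊤, ?_, fun v => Or.inr (key v), fun u v _ => by rw [key u, key v]⟩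
    intro a b hab
    simp only [SimpleGraph.top_adj] at hab
    simp only [SimpleGraph.induce, SimpleGraph.comap_adj, Function.Embedding.coe_subtype,
      SimpleGraph.top_adj]
    exact Subtype.coe_ne_coe.mpr hab
  · intro x y hxy
    have hcompl : (({x, y} : Finset (Fin n))ᶜ).Nonempty := by
      rw [← Finset.card_pos, Finset.card_compl, Fintype.card_fin]
      have h2 : ({x, y} : Finset (Fin n)).card ≤ 2 := by
        apply le_trans (Finset.card_insert_le _ _); simp
      omega
    obtain ⟨z, hz⟩ := hcompl
    simp only [Finset.mem_compl, Finset.mem_insert, Finset.mem_singleton, not_or] at hz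
    set T : Finset (Fin n) := {x, y, z} with hTdef
    have hT : T.card = 3 :=
      Finset.card_eq_three.mpr ⟨x, y, z, hxy, fun h => hz.1 h.symm, fun h => hz.2 h.symm, rfl⟩
    refine ⟨Tᶜ, ?_, ?_⟩
    · rw [Finset.card_compl, hT, Fintype.card_fin]
    rw [compl_compl]
    rintro ⟨H, hle, hdeg, hcomp⟩
    have hxm : x ∈ (T : Set (Fin n)) := by simp [hTdef]
    have hym : y ∈ (T : Set (Fin n)) := by simp [hTdef]
    have hzm : z ∈ (T : Set (Fin n)) := by simp [hTdef]
    set x' : (T : Set (Fin n)) := ⟨x, hxm⟩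
    set y' : (T : Set (Fin n)) := ⟨y, hym⟩
    set z' : (T : Set (Fin n)) := ⟨z, hzm⟩
    have hadjcases : ∀ (a w : (T : Set (Fin n))), H.Adj a w →
        (↑a : Fin n) ≠ ↑w ∧ s((↑a : Fin n), (↑w : Fin n)) ≠ s(x, y) := by
      intro a w hw
      have h := hle hw
      simp only [SimpleGraph.induce, SimpleGraph.comap_adj, Function.Embedding.coe_subtype,
        SimpleGraph.deleteEdges_adj, SimpleGraph.top_adj, Set.mem_singleton_iff] at h
      exact ⟨h.1, h.2⟩
    have hsubx : ∀ w, H.Adj x' w → w = z' := by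
      intro w hw
      obtain ⟨hne, hs⟩ := hadjcases x' w hw
      have hwT : (↑w : Fin n) ∈ T := w.2
      simp only [hTdef, Finset.mem_insert, Finset.mem_singleton] at hwT
      rcases hwT with h | h | h
      · exact absurd h.symm hne
      · exact absurd (by rw [h]) hs
      · exact Subtype.ext h
    have hsuby : ∀ w, H.Adj y' w → w = z' := by
      intro w hw
      obtain ⟨hne, hs⟩ := hadjcases y' w hw
      have hwT : (↑w : Fin n) ∈ T := w.2
      simp only [hTdef, Finset.mem_insert, Finset.mem_singleton] at hwT
      rcases hwT with h | h | h
      · exact absurd (by rw [h, Sym2.eq_swap]) hs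
      · exact absurd h.symm hne
      · exact Subtype.ext h
    have card1 : ∀ (a : (T : Set (Fin n))), (∀ w, H.Adj a w → w = z') →
        (H.neighborSet a).ncard = 1 ∧ H.Adj a z' := by
      intro a ha
      have hsub' : H.neighborSet a ⊆ {z'} := fun w hw => ha w hw
      have hle1 : (H.neighborSet a).ncard ≤ 1 := by
        simpa using Set.ncard_le_ncard hsub' (Set.finite_singleton z')
      have h1 : (H.neighborSet a).ncard = 1 := by rcases hdeg a with h | h <;> omega
      refine ⟨h1, ?_⟩
      obtain ⟨w, hw⟩ := Set.nonempty_of_ncard_ne_zero (by omega : (H.neighborSet a).ncard ≠ 0)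
      have := ha w hw
      subst this
      exact hw
    obtain ⟨hx1, hadjxz⟩ := card1 x' hsubx
    obtain ⟨hy1, hadjyz⟩ := card1 y' hsuby
    have hx'y' : x' ≠ y' := fun h => hxy (congrArg Subtype.val h)
    have hzsub : ({x', y'} : Set _) ⊆ H.neighborSet z' := by
      rintro w (rfl | rfl)
      · exact hadjxz.symm
      · exact hadjyz.symm
    have h2 : 2 ≤ (H.neighborSet z').ncard := by
      calc 2 = ({x', y'} : Set _).ncard := (Set.ncard_pair hx'y').symm
        _ ≤ _ := Set.ncard_le_ncard hzsub (Set.toFinite _)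
    have heq := hcomp x' z' hadjxz.reachable
    rcases hdeg z' with h | h <;> omega
end
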